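/- Suppose S is an unbounded set of positive reals, α : S → ℝ satisfies 0 ≤ α(T) < M for a constant M, and Δ : [1,∞) → ℝ is measurable. For each T ∈ S let A_T ⊆ [T/2, T] be measurable, and suppose (i) ∫_{A_T} Δ(x)²/x^{2α(T)+1} dx > c₉ > 0, (ii) μ(A_T) < c₁₀ h₀(T) for a positive function h₀ with x ↦ x^{α(T)+1/2} h₀(x)^{-1/2} monotonically increasing on [T/2,T]. If c₁₁ = √(c₉/(2^{2M+1} c₁₀)), then for each T ∈ S there exists x ∈ [T/2, T] with |Δ(x)| > c₁₁ x^{α(T)+1/2} h₀(x)^{-1/2}. -/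

import Mathlib

/-!
If `|Δ x| ≤ c₁₁ x^(α+1/2) h₀(x)^(-1/2)` held on all of `[T/2, T]`, monotonicity of the envelope
would bound the integrand `Δ(x)² / x^(2α+1)` on `A_T ⊆ [T/2, T]` by
`c₁₁² T^(2α+1) / (h₀(T) (T/2)^(2α+1)) ≤ c₁₁² 2^(2M+1) / h₀(T)`, and then the measure bound
`μ(A_T) < c₁₀ h₀(T)` would give `∫_{A_T} Δ² / x^(2α+1) ≤ c₁₁² 2^(2M+1) c₁₀ = c₉`,
contradicting the lower bound on the integral.
-/

open MeasureTheory Set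

lemma rpow_div_rpow_le_two_rpow {T x p : ℝ} (hT : 0 < T) (hx : x ∈ Icc (T / 2) T) (hp : 0 ≤ p) :
    T ^ p / x ^ p ≤ 2 ^ p := by
  have hx0 : 0 < x := by linarith [hx.1]
  rw [← Real.div_rpow hT.le hx0.le]
  exact Real.rpow_le_rpow (by positivity) ((div_le_iff₀ hx0).2 (by linarith [hx.1])) hp

lemma sq_rpow_add_half_mul_rpow_neg_half {x y a : ℝ} (hx : 0 ≤ x) (hy : 0 ≤ y) :
    (x ^ (a + 1 / 2) * y ^ (-(1 / 2) : ℝ)) ^ 2 = x ^ (2 * a + 1) / y := by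
  have hx_exp : (a + 1 / 2) * ((2 : ℕ) : ℝ) = 2 * a + 1 := by push_cast; ring
  have hy_exp : (-(1 / 2) : ℝ) * ((2 : ℕ) : ℝ) = -1 := by norm_num
  rw [mul_pow, ← Real.rpow_mul_natCast hx, ← Real.rpow_mul_natCast hy, hx_exp, hy_exp,
    Real.rpow_neg_one, div_eq_mul_inv]

lemma sq_div_rpow_le_of_abs_le {d c x T a h : ℝ} (hT : 0 < T) (hx : x ∈ Icc (T / 2) T)
    (ha : 0 ≤ a) (hh : 0 < h) (hd : |d| ≤ c * (T ^ (a + 1 / 2) * h ^ (-(1 / 2) : ℝ))) :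
    d ^ 2 / x ^ (2 * a + 1) ≤ c ^ 2 * 2 ^ (2 * a + 1) / h := by
  have hsq : d ^ 2 ≤ c ^ 2 * (T ^ (2 * a + 1) / h) := by
    rw [← sq_abs, ← sq_rpow_add_half_mul_rpow_neg_half hT.le hh.le, ← mul_pow]
    exact pow_le_pow_left₀ (abs_nonneg d) hd 2
  have hxp : 0 < x ^ (2 * a + 1) := Real.rpow_pos_of_pos (by linarith [hx.1]) _
  calc d ^ 2 / x ^ (2 * a + 1) ≤ c ^ 2 * (T ^ (2 * a + 1) / h) / x ^ (2 * a + 1) := by gcongr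
    _ = c ^ 2 / h * (T ^ (2 * a + 1) / x ^ (2 * a + 1)) := by ring
    _ ≤ c ^ 2 / h * 2 ^ (2 * a + 1) := by
        gcongr
        exact rpow_div_rpow_le_two_rpow hT hx (by linarith)
    _ = c ^ 2 * 2 ^ (2 * a + 1) / h := by ring

lemma exists_mem_Icc_lt_abs_of_lt_setIntegral {T a M c₉ c₁₀ c : ℝ} {h Δ : ℝ → ℝ} {A : Set ℝ}
    (hT : 0 < T) (ha : 0 ≤ a) (haM : a < M) (hh : 0 < h T) (hc₁₀ : 0 < c₁₀) (hc : 0 ≤ c)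
    (hA : A ⊆ Icc (T / 2) T)
    (hlow : c₉ < ∫ x in A, Δ x ^ 2 / x ^ (2 * a + 1))
    (hvol : volume A < ENNReal.ofReal (c₁₀ * h T))
    (hmono : MonotoneOn (fun x => x ^ (a + 1 / 2) * h x ^ (-(1 / 2) : ℝ)) (Icc (T / 2) T))
    (hc₉_bound : c ^ 2 * 2 ^ (2 * M + 1) * c₁₀ ≤ c₉) :
    ∃ x ∈ Icc (T / 2) T, c * x ^ (a + 1 / 2) * h x ^ (-(1 / 2) : ℝ) < |Δ x| := by
  by_contra! hsmall
  set C := c ^ 2 * 2 ^ (2 * M + 1) / h T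
  have hpoint : ∀ x ∈ A, ‖Δ x ^ 2 / x ^ (2 * a + 1)‖ ≤ C := by
    intro x hxA
    have hx := hA hxA
    have hTmem : T ∈ Icc (T / 2) T := ⟨by linarith, le_rfl⟩
    have hd : |Δ x| ≤ c * (T ^ (a + 1 / 2) * h T ^ (-(1 / 2) : ℝ)) :=
      calc |Δ x| ≤ c * (x ^ (a + 1 / 2) * h x ^ (-(1 / 2) : ℝ)) := by
            simpa only [mul_assoc] using hsmall x hx
        _ ≤ _ := mul_le_mul_of_nonneg_left (hmono hx hTmem hx.2) hc
    have hexp : (2 : ℝ) ^ (2 * a + 1) ≤ 2 ^ (2 * M + 1) :=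
      Real.rpow_le_rpow_of_exponent_le one_le_two (by linarith)
    rw [Real.norm_of_nonneg (div_nonneg (sq_nonneg _) (Real.rpow_nonneg (by linarith [hx.1]) _))]
    calc Δ x ^ 2 / x ^ (2 * a + 1) ≤ c ^ 2 * 2 ^ (2 * a + 1) / h T :=
          sq_div_rpow_le_of_abs_le hT hx ha hh hd
      _ ≤ C := by simp only [C]; gcongr
  have hvol' : volume.real A ≤ c₁₀ * h T :=
    ENNReal.toReal_le_of_le_ofReal (by positivity) hvol.le
  have hint := norm_setIntegral_le_of_norm_le_const (hvol.trans_le le_top) hpoint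
  have hupper : (∫ x in A, Δ x ^ 2 / x ^ (2 * a + 1)) ≤ c₉ :=
    calc (∫ x in A, Δ x ^ 2 / x ^ (2 * a + 1)) ≤ C * volume.real A := (le_abs_self _).trans hint
      _ ≤ C * (c₁₀ * h T) := by gcongr
      _ = c ^ 2 * 2 ^ (2 * M + 1) * c₁₀ := by simp only [C]; field_simp
      _ ≤ c₉ := hc₉_bound
  exact (hlow.trans_le hupper).false

theorem stmt3_general (S : Set ℝ) (α h₀ Δ : ℝ → ℝ) (A : ℝ → Set ℝ)
    (M c₉ c₁₀ c₁₁ : ℝ)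
    (hS : S ⊆ Set.Ioi 0)
    (hα : ∀ T ∈ S, 0 ≤ α T ∧ α T < M)
    (hh₀ : ∀ x, 0 < h₀ x)
    (hc₉ : 0 < c₉) (hc₁₀ : 0 < c₁₀)
    (hAsub : ∀ T ∈ S, A T ⊆ Set.Icc (T / 2) T)
    (hlow : ∀ T ∈ S, c₉ < ∫ x in A T, (Δ x) ^ 2 / x ^ (2 * α T + 1))
    (hmeasure : ∀ T ∈ S, volume (A T) < ENNReal.ofReal (c₁₀ * h₀ T))
    (hmono : ∀ T ∈ S, MonotoneOn (fun x => x ^ (α T + 1 / 2) * (h₀ x) ^ (-(1 / 2) : ℝ))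
      (Set.Icc (T / 2) T))
    (hc₁₁ : c₁₁ = Real.sqrt (c₉ / ((2 : ℝ) ^ (2 * M + 1) * c₁₀))) :
    ∀ T ∈ S, ∃ x ∈ Set.Icc (T / 2) T,
      c₁₁ * x ^ (α T + 1 / 2) * (h₀ x) ^ (-(1 / 2) : ℝ) < |Δ x| := by
  intro T hT
  have hc₁₁sq : c₁₁ ^ 2 * 2 ^ (2 * M + 1) * c₁₀ = c₉ := by
    rw [hc₁₁, Real.sq_sqrt (by positivity)]
    field_simp
  exact exists_mem_Icc_lt_abs_of_lt_setIntegral (hS hT) (hα T hT).1 (hα T hT).2 (hh₀ T) hc₁₀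
    (hc₁₁ ▸ Real.sqrt_nonneg _) (hAsub T hT) (hlow T hT) (hmeasure T hT) (hmono T hT)
    hc₁₁sq.le

theorem stmt3 (S : Set ℝ) (α h₀ Δ : ℝ → ℝ) (A : ℝ → Set ℝ)
    (M c₉ c₁₀ c₁₁ : ℝ)
    (hS : S ⊆ Set.Ioi 0) (hSunbdd : ¬ BddAbove S)
    (hα : ∀ T ∈ S, 0 ≤ α T ∧ α T < M)
    (hΔ : Measurable Δ)
    (hh₀ : ∀ x, 0 < h₀ x)
    (hc₉ : 0 < c₉) (hc₁₀ : 0 < c₁₀)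
    (hAsub : ∀ T ∈ S, A T ⊆ Set.Icc (T / 2) T)
    (hAmeas : ∀ T ∈ S, MeasurableSet (A T))
    (hlow : ∀ T ∈ S, c₉ < ∫ x in A T, (Δ x) ^ 2 / x ^ (2 * α T + 1))
    (hmeasure : ∀ T ∈ S, volume (A T) < ENNReal.ofReal (c₁₀ * h₀ T))
    (hmono : ∀ T ∈ S, MonotoneOn (fun x => x ^ (α T + 1 / 2) * (h₀ x) ^ (-(1 / 2) : ℝ))
      (Set.Icc (T / 2) T))
    (hc₁₁ : c₁₁ = Real.sqrt (c₉ / ((2 : ℝ) ^ (2 * M + 1) * c₁₀))) :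
    ∀ T ∈ S, ∃ x ∈ Set.Icc (T / 2) T,
      c₁₁ * x ^ (α T + 1 / 2) * (h₀ x) ^ (-(1 / 2) : ℝ) < |Δ x| :=
  stmt3_general S α h₀ Δ A M c₉ c₁₀ c₁₁ hS hα hh₀ hc₉ hc₁₀ hAsub hlow hmeasure hmono hc₁₁
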